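/- The Cartesian product with both arguments safe, prod(- /a,b) = a×b = {⟨u,v⟩ : u∈a, v∈b}, is not in PCSF; moreover even the function f(- /a) = {0}×a = {⟨0,b⟩ : b∈a} (with safe argument a) is not in PCSF. On the other hand, the Cartesian product with both arguments normal, f(x,y/ -) = x×y, is in PCSF. Here ⟨u,v⟩ = {{u},{u,v}} is the Kuratowski pair. -/

import Mathlib

open scoped Classical

noncomputable section

namespace PCSFPaper

/-! ## Basic ZF-set helpers -/

/-- Image `{f z : z ∈ x}` of a ZF-set under an arbitrary class function. -/
noncomputable def zImage (f : ZFSet → ZFSet) (x : ZFSet) : ZFSet :=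
  @ZFSet.image f (Classical.allZFSetDefinable fun s => f (s 0)) x

/-- Kuratowski ordered pair `⟨c,d⟩ = {{c},{c,d}}`. -/
def kpair (c d : ZFSet) : ZFSet := {{c}, {c, d}}

/-! ## Δ₀ formulas of the language of set theory -/

/-- Δ₀ (bounded) formulas in the first-order language of set theory,
with `k` free variables.  In the bounded quantifiers `ball i φ`/`bex i φ`
the newly bound variable (ranging over the elements of variable `i`)
becomes variable `0` of `φ`, the old variables being shifted up by one. -/
inductive D0 : ℕ → Type
  | mem {k : ℕ} (i j : Fin k) : D0 k
  | eq {k : ℕ} (i j : Fin k) : D0 k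
  | not {k : ℕ} : D0 k → D0 k
  | and {k : ℕ} : D0 k → D0 k → D0 k
  | or {k : ℕ} : D0 k → D0 k → D0 k
  | ball {k : ℕ} (i : Fin k) : D0 (k + 1) → D0 k
  | bex {k : ℕ} (i : Fin k) : D0 (k + 1) → D0 k

/-- Satisfaction of Δ₀ formulas in the universe of ZF-sets. -/
def D0.Sat : ∀ {k : ℕ}, D0 k → (Fin k → ZFSet) → Prop
  | _, .mem i j, v => v i ∈ v j
  | _, .eq i j, v => v i = v j
  | _, .not φ, v => ¬ φ.Sat v
  | _, .and φ ψ, v => φ.Sat v ∧ ψ.Sat v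
  | _, .or φ ψ, v => φ.Sat v ∨ ψ.Sat v
  | _, .ball i φ, v => ∀ z ∈ v i, φ.Sat (Fin.cons z v)
  | _, .bex i φ, v => ∃ z ∈ v i, φ.Sat (Fin.cons z v)

/-- A `k`-ary relation on sets is Δ₀ iff it is defined by some Δ₀ formula. -/
def IsDelta0 {k : ℕ} (R : (Fin k → ZFSet) → Prop) : Prop :=
  ∃ φ : D0 k, ∀ v, R v ↔ φ.Sat v

/-! ## The classes PCSF⁻ and PCSF -/

/-- The class `PCSF⁻` of predicatively computable set functions taking only
safe arguments: generated from projections, pairing, null, union and the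
membership conditional, by composition and safe separation. -/
inductive PCSFminus : ∀ m : ℕ, ((Fin m → ZFSet) → ZFSet) → Prop
  | proj {m : ℕ} (j : Fin m) : PCSFminus m fun a => a j
  | pair : PCSFminus 2 fun a => {a 0, a 1}
  | null : PCSFminus 0 fun _ => ∅
  | union : PCSFminus 1 fun a => ZFSet.sUnion (a 0)
  | cond : PCSFminus 4 fun a => if a 2 ∈ a 3 then a 0 else a 1
  | comp {m k : ℕ} (h : (Fin k → ZFSet) → ZFSet) (t : Fin k → (Fin m → ZFSet) → ZFSet) :
      PCSFminus k h → (∀ i, PCSFminus m (t i)) →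
      PCSFminus m fun a => h fun i => t i a
  | sep {m : ℕ} (h : (Fin (m + 1) → ZFSet) → ZFSet) :
      PCSFminus (m + 1) h →
      PCSFminus (m + 1) fun a =>
        ZFSet.sep (fun b => h (Fin.snoc (Fin.init a) b) ≠ ∅) (a (Fin.last m))

/-- The class `PCSF` of predicatively computable set functions, with `n` normal
and `m` safe arguments: generated from `PCSF⁻` (whose arguments are all safe)
and projections by safe composition and predicative set recursion.  The
recursion rule is stated via its defining equation (which determines the
function uniquely, by ∈-induction); the recursion argument `x` is the first
normal argument, and the set `{f(z,ȳ/ā) : z ∈ x}` of previous values is passed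
to `h` as a last, safe, argument. -/
inductive PCSF : ∀ n m : ℕ, ((Fin n → ZFSet) → (Fin m → ZFSet) → ZFSet) → Prop
  | ofMinus {m : ℕ} (h : (Fin m → ZFSet) → ZFSet) :
      PCSFminus m h → PCSF 0 m fun _ a => h a
  | proj {n m : ℕ} (j : Fin (n + m)) : PCSF n m fun x a => Fin.append x a j
  | comp {n m k l : ℕ} (h : (Fin k → ZFSet) → (Fin l → ZFSet) → ZFSet)
      (r : Fin k → (Fin n → ZFSet) → (Fin 0 → ZFSet) → ZFSet)
      (t : Fin l → (Fin n → ZFSet) → (Fin m → ZFSet) → ZFSet) :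
      PCSF k l h → (∀ i, PCSF n 0 (r i)) → (∀ i, PCSF n m (t i)) →
      PCSF n m fun x a => h (fun i => r i x Fin.elim0) fun i => t i x a
  | recur {n m : ℕ} (h : (Fin (n + 1) → ZFSet) → (Fin (m + 1) → ZFSet) → ZFSet)
      (f : (Fin (n + 1) → ZFSet) → (Fin m → ZFSet) → ZFSet) :
      PCSF (n + 1) (m + 1) h →
      (∀ (x : ZFSet) (y : Fin n → ZFSet) (a : Fin m → ZFSet),
        f (Fin.cons x y) a =
          h (Fin.cons x y) (Fin.snoc a (zImage (fun z => f (Fin.cons z y) a) x))) →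
      PCSF (n + 1) m f

/-- A relation is in `PCSF` iff its characteristic function
(`1 = {∅}` for true, `0 = ∅` for false) is in `PCSF`. -/
def PCSFRel (n m : ℕ) (R : (Fin n → ZFSet) → (Fin m → ZFSet) → Prop) : Prop :=
  PCSF n m fun x a => if R x a then ({∅} : ZFSet) else ∅

/-! ## Transitive closure, hereditary finiteness -/

/-- Transitive closure `TC(x) = x ∪ ⋃{TC(y) : y ∈ x}` by ∈-recursion. -/
noncomputable def TCset : ZFSet → ZFSet :=
  ZFSet.mem_wf.fix fun x ih =>
    x ∪ ZFSet.sUnion (zImage (fun y => if h : y ∈ x then ih y h else ∅) x)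

/-- A set is hereditarily finite iff its transitive closure is finite. -/
def IsHF (x : ZFSet) : Prop := (TCset x).toSet.Finite

/-- `cT x` = cardinality of the transitive closure of `x`
(junk value `0` if infinite). -/
noncomputable def cT (x : ZFSet) : ℕ := (TCset x).toSet.ncard

/-- The finite union `A₁ ∪ ⋯ ∪ Aₘ`. -/
def unionFin {m : ℕ} (A : Fin m → ZFSet) : ZFSet :=
  (List.ofFn A).foldr (· ∪ ·) ∅

/-! ## The encoding ν of binary strings, application, product -/

/-- The von Neumann numeral 1 = {∅}. -/
def zOne : ZFSet := {∅}

/-- The von Neumann numeral 2 = {∅,{∅}}. -/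
def zTwo : ZFSet := {∅, {∅}}

/-- The encoding of binary strings (head of the list = last appended bit):
`ν(ε) = ∅` and `ν(s i) = ⟨i+1, ν s⟩`, a bit `i ∈ {0,1}` being represented
by the boolean `i = 1`. -/
def nu : List Bool → ZFSet
  | [] => ∅
  | b :: s => kpair (if b then zTwo else zOne) (nu s)

/-- `zApp b c = b'c = ⋃{d ∈ ⋃⋃b : ⟨c,d⟩ ∈ b}` (which is `⋃{d : ⟨c,d⟩ ∈ b}`,
since every such `d` belongs to `⋃⋃b`). -/
def zApp (b c : ZFSet) : ZFSet :=
  ZFSet.sUnion (ZFSet.sep (fun d => kpair c d ∈ b) (ZFSet.sUnion (ZFSet.sUnion b)))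

/-- Cartesian product `a × b = {⟨u,v⟩ : u ∈ a, v ∈ b}` (with Kuratowski pairs). -/
noncomputable def zProd (a b : ZFSet) : ZFSet :=
  ZFSet.sUnion (zImage (fun u => zImage (fun v => kpair u v) b) a)

/-! ## Polynomial time computability on binary strings -/

/-- The trivial encoding of binary strings over the alphabet `Bool`. -/
def boolListEncoding : Computability.Encoding (List Bool) Bool where
  encode := id
  decode := fun l => some l
  decode_encode := fun _ => rfl

/-- Encoding of a tuple of binary strings over the alphabet `Option Bool`:
the strings are listed in order, each terminated by the separator `none`. -/
def encTuple : (k : ℕ) → (Fin k → List Bool) → List (Option Bool)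
  | 0, _ => []
  | k + 1, v => (v 0).map some ++ none :: encTuple k (Fin.tail v)

/-- Splits off the first separator-terminated block. -/
def splitFirst : List (Option Bool) → List Bool × List (Option Bool)
  | [] => ([], [])
  | none :: l => ([], l)
  | some b :: l => ((splitFirst l).1.cons b, (splitFirst l).2)

theorem splitFirst_encode (s : List Bool) (rest : List (Option Bool)) :
    splitFirst (s.map some ++ none :: rest) = (s, rest) := by
  induction s with
  | nil => rfl
  | cons b s ih => simp [splitFirst, ih]

/-- Decoding of tuples of binary strings. -/
def decTuple : (k : ℕ) → List (Option Bool) → Option (Fin k → List Bool)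
  | 0, _ => some Fin.elim0
  | k + 1, l =>
    (decTuple k (splitFirst l).2).map fun v => Fin.cons (splitFirst l).1 v

theorem decTuple_encTuple : ∀ (k : ℕ) (v : Fin k → List Bool),
    decTuple k (encTuple k v) = some v := by
  intro k
  induction k with
  | zero =>
    intro v
    simp only [decTuple]
    congr
    exact funext fun i => i.elim0
  | succ k ih =>
    intro v
    simp [decTuple, encTuple, splitFirst_encode, ih (Fin.tail v), Fin.cons_self_tail]

/-- The standard encoding of tuples of binary strings. -/
def tupleEncoding (k : ℕ) : Computability.Encoding (Fin k → List Bool) (Option Bool) where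
  encode := encTuple k
  decode := decTuple k
  decode_encode := decTuple_encTuple k

/-- A function on tuples of binary strings is polynomial time computable iff
some two-stack machine computes it in polynomial time (Mathlib's notion). -/
def PolyTimeStringFun {k : ℕ} (f : (Fin k → List Bool) → List Bool) : Prop :=
  Nonempty (Turing.TM2ComputableInPolyTime (tupleEncoding k).encode boolListEncoding.encode f)

/-- Polynomial time computability for functions on ℕ,
with respect to the standard binary encoding of naturals. -/
def PolyTimeNatFun (f : ℕ → ℕ) : Prop :=
  Nonempty (Turing.TM2ComputableInPolyTime Computability.encodingNatBool.encode
    Computability.encodingNatBool.encode f)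

/-! ## A feasible encoding of lists of naturals by naturals -/

/-- Reads a list of bits (least significant first) as a natural number. -/
def bitsToNat (l : List Bool) : ℕ := l.foldr (fun b n => Nat.bit b n) 0

/-- A standard feasible (linear size) encoding of lists of natural numbers:
every bit of the binary expansion of an entry is escaped as `[false, b]`,
entries are terminated by `[true, true]`, and a final `true` protects
leading zeros. -/
def encodeNatList (l : List ℕ) : ℕ :=
  bitsToNat
    ((l.map fun n => (Nat.bits n).foldr (fun b acc => false :: b :: acc) [true, true]).foldr
        (· ++ ·) [true])

/-! ## Rooted DAGs encoding hereditarily finite sets -/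

/-- A rooted DAG: a finite set `V` of natural numbers, edges `E ⊆ V × V`
going strictly downwards, and a root `r ∈ V` which is the only node of
indegree zero. -/
structure RootedDag where
  V : Finset ℕ
  E : Finset (ℕ × ℕ)
  r : ℕ
  edge_mem : ∀ e ∈ E, e.1 ∈ V ∧ e.2 ∈ V
  root_mem : r ∈ V
  root_indeg : ∀ e ∈ E, e.2 ≠ r
  reach_nonroot : ∀ a ∈ V, a ≠ r → ∃ b ∈ V, (b, a) ∈ E
  desc : ∀ e ∈ E, e.2 < e.1

namespace RootedDag

/-- The children of a node. -/
def children (G : RootedDag) (a : ℕ) : Finset ℕ :=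
  (G.E.filter fun e => e.1 = a).image Prod.snd

theorem children_lt (G : RootedDag) {a b : ℕ} (h : b ∈ G.children a) : b < a := by
  simp only [children, Finset.mem_image, Finset.mem_filter] at h
  obtain ⟨e, ⟨heE, he1⟩, he2⟩ := h
  have := G.desc e heE
  omega

/-- The hereditarily finite set encoded at a node:
`set_G(a) = {set_G(b) : (a,b) ∈ E}`. -/
def setAt (G : RootedDag) (a : ℕ) : ZFSet.{0} :=
  (((G.children a).attach.toList).map fun b => G.setAt b.1).foldr insert ∅
termination_by a
decreasing_by exact G.children_lt b.2

/-- The hereditarily finite set encoded by a rooted DAG. -/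
def set (G : RootedDag) : ZFSet.{0} := G.setAt G.r

/-- A DAG is fully collapsed iff distinct nodes encode distinct sets. -/
def FullyCollapsed (G : RootedDag) : Prop :=
  ∀ a ∈ G.V, ∀ b ∈ G.V, G.setAt a = G.setAt b → a = b

/-- Reachability along edges. -/
def Reaches (G : RootedDag) (a b : ℕ) : Prop :=
  Relation.ReflTransGen (fun u v => (u, v) ∈ G.E) a b

/-- The node set of the sub-DAG `G|a` of nodes reachable from `a`. -/
noncomputable def reachSet (G : RootedDag) (a : ℕ) : Finset ℕ :=
  G.V.filter fun b => G.Reaches a b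

/-- A DAG is balanced iff each node `a` is at most the number of nodes of `G|a`. -/
def Balanced (G : RootedDag) : Prop :=
  ∀ a ∈ G.V, a ≤ (G.reachSet a).card

end RootedDag

/-- The numeric code `⌈G⌉` of a rooted DAG: the code of the triple consisting
of (the code of) the sorted list of vertices, (the code of) the sorted list of
pair-coded edges, and the root. -/
noncomputable def RootedDag.code (G : RootedDag) : ℕ :=
  encodeNatList [encodeNatList (G.V.sort (· ≤ ·)),
    encodeNatList ((G.E.image fun e => Nat.pair e.1 e.2).sort (· ≤ ·)), G.r]

/-- The finite set `{l₀, …, l_{n-1}}` as a ZF-set. -/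
def zSetOfList (l : List ZFSet) : ZFSet := l.foldr insert ∅

/-!
A PCSF function adds only boundedly many elements to the transitive closures of its safe
arguments: for hereditarily finite normal arguments `x̄` there is `C` with
`|TC(f(x̄/ā)) \ ⋃ᵢ TC(aᵢ)| ≤ C` for all `ā`. Projections, union, separation and the conditional
add nothing, pairing adds two elements, composition adds up the constants, and recursion on a
hereditarily finite `x` adds at most `|x|` plus the constants of the earlier values. But `{0} × a`
contains `{∅, s} ∈ ⟨∅, s⟩` for every `s ∈ a`, and these are new whenever `TC(a)` consists of sets
with at most one element; `a × b` specializes to `{0} × a`.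

Over normal arguments images are computable: recursion on `x` builds the graph
`G(x) = {⟨x, g x⟩} ∪ ⋃ {G(z) : z ∈ x}` of `g` on `TC(x) ∪ {x}`, and
`{g z : z ∈ x} = {q ∈ ⋃⋃G(x) : ∃ z ∈ x, ⟨z, q⟩ ∈ G(x)}` is a safe separation. The product
`x × y = ⋃ {{u} × y : u ∈ x}` is then two nested images.
-/

open ZFSet

theorem mem_zImage {f : ZFSet → ZFSet} {x y : ZFSet} : y ∈ zImage f x ↔ ∃ z ∈ x, f z = y :=
  @ZFSet.mem_image f (Classical.allZFSetDefinable fun s => f (s 0)) x y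

theorem zImage_congr {f g : ZFSet → ZFSet} {x : ZFSet} (h : ∀ z ∈ x, f z = g z) :
    zImage f x = zImage g x := by
  ext w
  simp only [mem_zImage]
  exact exists_congr fun z => and_congr_right fun hz => by rw [h z hz]

theorem coe_zImage (f : ZFSet → ZFSet) (x : ZFSet) : (zImage f x : Set ZFSet) = f '' x := by
  ext w
  simp [mem_zImage]

theorem zImage_singleton (f : ZFSet → ZFSet) (x : ZFSet) : zImage f {x} = {f x} := by
  ext y
  simp [mem_zImage, eq_comm]

theorem singleton_ne_empty (x : ZFSet) : ({x} : ZFSet) ≠ ∅ :=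
  fun h => notMem_empty x (h ▸ mem_singleton.2 rfl)

theorem kpair_inj {u v u' v' : ZFSet} : kpair u v = kpair u' v' ↔ u = u' ∧ v = v' :=
  ZFSet.pair_inj

theorem mem_kpair_right (u v : ZFSet) : ({u, v} : ZFSet) ∈ kpair u v := by
  simp [kpair]

def memRec (H : ZFSet → ZFSet → ZFSet) : ZFSet → ZFSet :=
  ZFSet.mem_wf.fix fun x ih => H x (zImage (fun y => if h : y ∈ x then ih y h else ∅) x)

theorem memRec_eq (H : ZFSet → ZFSet → ZFSet) (x : ZFSet) :
    memRec H x = H x (zImage (memRec H) x) := by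
  rw [memRec, WellFounded.fix_eq]
  congr 1
  exact zImage_congr fun z hz => dif_pos hz

-- `TCset` is definitionally `memRec fun x P => x ∪ ⋃₀ P`.
theorem TCset_eq (x : ZFSet) : TCset x = x ∪ ⋃₀ zImage TCset x :=
  memRec_eq (fun x P => x ∪ ⋃₀ P) x

theorem mem_TCset {w x : ZFSet} : w ∈ TCset x ↔ w ∈ x ∨ ∃ y ∈ x, w ∈ TCset y := by
  rw [TCset_eq, mem_union, mem_sUnion]
  simp only [mem_zImage]
  constructor
  · rintro (h | ⟨_, ⟨y, hy, rfl⟩, hw⟩)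
    exacts [.inl h, .inr ⟨y, hy, hw⟩]
  · rintro (h | ⟨y, hy, hw⟩)
    exacts [.inl h, .inr ⟨_, ⟨y, hy, rfl⟩, hw⟩]

theorem subset_TCset (x : ZFSet) : x ⊆ TCset x := fun _ h => mem_TCset.2 (.inl h)

theorem TCset_subset_TCset_of_mem {x y : ZFSet} (h : y ∈ x) : TCset y ⊆ TCset x :=
  fun _ hw => mem_TCset.2 (.inr ⟨y, h, hw⟩)

theorem isTransitive_TCset (x : ZFSet) : (TCset x).IsTransitive := by
  induction x using ZFSet.inductionOn with
  | _ x ih =>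
    intro y hy
    rcases mem_TCset.1 hy with hy | ⟨z, hz, hy⟩
    · exact (subset_TCset y).trans (TCset_subset_TCset_of_mem hy)
    · exact ((ih z hz).subset_of_mem hy).trans (TCset_subset_TCset_of_mem hz)

theorem TCset_subset {x t : ZFSet} (ht : t.IsTransitive) (h : x ⊆ t) : TCset x ⊆ t := by
  induction x using ZFSet.inductionOn with
  | _ x ih =>
    intro w hw
    rcases mem_TCset.1 hw with hw | ⟨y, hy, hw⟩
    · exact h hw
    · exact ih y hy (ht.subset_of_mem (h hy)) hw

theorem TCset_eq_self {x : ZFSet} (hx : x.IsTransitive) : TCset x = x :=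
  (TCset_subset hx subset_rfl).antisymm (subset_TCset x)

theorem IsHF.finite {x : ZFSet} (hx : IsHF x) : (x : Set ZFSet).Finite :=
  Set.Finite.subset hx (subset_TCset x)

theorem IsHF.of_mem {x y : ZFSet} (hx : IsHF x) (hy : y ∈ x) : IsHF y :=
  Set.Finite.subset hx (TCset_subset_TCset_of_mem hy)

def BoundedGrowth {m : ℕ} (f : (Fin m → ZFSet) → ZFSet) : Prop :=
  ∃ C : ℕ, ∀ a, ((TCset (f a) : Set ZFSet) \ ⋃ i, (TCset (a i) : Set ZFSet)).encard ≤ C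

namespace BoundedGrowth

variable {m : ℕ}

theorem of_TCset_subset {f : (Fin m → ZFSet) → ZFSet}
    (h : ∀ a, (TCset (f a) : Set ZFSet) ⊆ ⋃ i, (TCset (a i) : Set ZFSet)) : BoundedGrowth f :=
  ⟨0, fun a => by simp [Set.sdiff_eq_empty.2 (h a)]⟩

theorem of_TCset_subset_TCset {f : (Fin m → ZFSet) → ZFSet} (j : (Fin m → ZFSet) → Fin m)
    (h : ∀ a, TCset (f a) ⊆ TCset (a (j a))) : BoundedGrowth f :=
  of_TCset_subset fun a _ hw => Set.mem_iUnion.2 ⟨j a, h a hw⟩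

theorem const {c : ZFSet} (hc : IsHF c) : BoundedGrowth fun _ : Fin m → ZFSet => c :=
  ⟨(TCset c : Set ZFSet).ncard, fun _ => by
    rw [Set.Finite.cast_ncard_eq (s := (TCset c : Set ZFSet)) hc]
    exact Set.encard_le_encard Set.sdiff_subset⟩

theorem pair : BoundedGrowth fun a : Fin 2 → ZFSet => ({a 0, a 1} : ZFSet) := by
  refine ⟨2, fun a => ?_⟩
  have hsub : (TCset {a 0, a 1} : Set ZFSet) \ ⋃ i, (TCset (a i) : Set ZFSet) ⊆ {a 0, a 1} := by
    rintro w ⟨hw, hwU⟩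
    rcases mem_TCset.1 hw with hw | ⟨y, hy, hw⟩
    · simpa using hw
    · refine (hwU (Set.mem_iUnion.2 ?_)).elim
      rcases mem_pair.1 hy with rfl | rfl
      exacts [⟨0, hw⟩, ⟨1, hw⟩]
  calc _ ≤ ({a 0, a 1} : Set ZFSet).encard := Set.encard_le_encard hsub
    _ ≤ 2 := (Set.encard_insert_le _ _).trans (by norm_num)

theorem comp {l : ℕ} {h : (Fin l → ZFSet) → ZFSet} {t : Fin l → (Fin m → ZFSet) → ZFSet}
    (hh : BoundedGrowth h) (ht : ∀ i, BoundedGrowth (t i)) :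
    BoundedGrowth fun a => h fun i => t i a := by
  obtain ⟨Ch, hCh⟩ := hh
  choose Ct hCt using ht
  refine ⟨Ch + ∑ i, Ct i, fun a => ?_⟩
  set U := ⋃ i, (TCset (a i) : Set ZFSet)
  set T := fun i => (TCset (t i a) : Set ZFSet)
  have hsub : (TCset (h fun i => t i a) : Set ZFSet) \ U ⊆
      ((TCset (h fun i => t i a) : Set ZFSet) \ ⋃ i, T i) ∪ ⋃ i, (T i \ U) := by
    rintro w ⟨hw, hwU⟩
    by_cases hwT : w ∈ ⋃ i, T i
    · obtain ⟨i, hi⟩ := Set.mem_iUnion.1 hwT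
      exact .inr (Set.mem_iUnion.2 ⟨i, hi, hwU⟩)
    · exact .inl ⟨hw, hwT⟩
  calc _ ≤ _ := Set.encard_le_encard hsub
    _ ≤ _ := Set.encard_union_le _ _
    _ ≤ Ch + ∑ i, (T i \ U).encard := add_le_add (hCh _) (Set.encard_iUnion_le_of_fintype _)
    _ ≤ Ch + ∑ i, (Ct i : ℕ∞) := by gcongr with i; exact hCt i a
    _ = _ := by push_cast; rfl

theorem proj (j : Fin m) : BoundedGrowth fun a => a j :=
  of_TCset_subset_TCset (fun _ => j) fun _ => subset_rfl

theorem snoc {h : (Fin (m + 1) → ZFSet) → ZFSet} {p : (Fin m → ZFSet) → ZFSet}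
    (hh : BoundedGrowth h) (hp : BoundedGrowth p) :
    BoundedGrowth fun a => h (Fin.snoc a (p a)) := by
  refine hh.comp (t := fun i a => Fin.snoc (α := fun _ => ZFSet) a (p a) i) fun i => ?_
  induction i using Fin.lastCases with
  | last => simp only [Fin.snoc_last]; exact hp
  | cast j => simp only [Fin.snoc_castSucc]; exact proj j

theorem image {x : ZFSet} (hx : (x : Set ZFSet).Finite) {G : ZFSet → (Fin m → ZFSet) → ZFSet}
    (hG : ∀ z ∈ x, BoundedGrowth (G z)) : BoundedGrowth fun a => zImage (fun z => G z a) x := by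
  choose! C hC using hG
  refine ⟨hx.toFinset.card + ∑ z ∈ hx.toFinset, C z, fun a => ?_⟩
  set U := ⋃ i, (TCset (a i) : Set ZFSet)
  have hsub : (TCset (zImage (fun z => G z a) x) : Set ZFSet) \ U ⊆
      (fun z => G z a) '' x ∪ ⋃ z ∈ hx.toFinset, ((TCset (G z a) : Set ZFSet) \ U) := by
    rintro w ⟨hw, hwU⟩
    rcases mem_TCset.1 hw with hw | ⟨y, hy, hw⟩
    · exact .inl (by rwa [← coe_zImage])
    · obtain ⟨z, hz, rfl⟩ := mem_zImage.1 hy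
      exact .inr (Set.mem_biUnion (hx.mem_toFinset.2 hz) ⟨hw, hwU⟩)
  calc _ ≤ _ := Set.encard_le_encard hsub
    _ ≤ _ := Set.encard_union_le _ _
    _ ≤ hx.toFinset.card + ∑ z ∈ hx.toFinset, ((TCset (G z a) : Set ZFSet) \ U).encard := by
      refine add_le_add ?_ (Finset.set_encard_biUnion_le _ _)
      rw [← Set.encard_coe_eq_coe_finsetCard, Set.Finite.coe_toFinset]
      exact Set.encard_image_le _ _
    _ ≤ _ := by
      push_cast
      gcongr with z hz
      exact hC z (hx.mem_toFinset.1 hz) a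

end BoundedGrowth

theorem PCSFminus.boundedGrowth {m : ℕ} {f : (Fin m → ZFSet) → ZFSet} (hf : PCSFminus m f) :
    BoundedGrowth f := by
  induction hf with
  | proj j => exact .proj j
  | pair => exact .pair
  | null => exact .of_TCset_subset fun _ => by simp [TCset_eq_self isTransitive_empty]
  | union =>
    refine .of_TCset_subset_TCset (fun _ => 0) fun a => TCset_subset (isTransitive_TCset _) ?_
    intro w hw
    obtain ⟨z, hz, hwz⟩ := mem_sUnion.1 hw
    exact (isTransitive_TCset _).mem_trans hwz (subset_TCset _ hz)
  | cond =>
    refine .of_TCset_subset_TCset (fun a => if a 2 ∈ a 3 then 0 else 1) fun a => ?_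
    split_ifs <;> exact subset_rfl
  | comp _ _ _ _ ihh iht => exact ihh.comp iht
  | sep _ _ _ =>
    refine .of_TCset_subset_TCset (fun _ => Fin.last _) fun a =>
      TCset_subset (isTransitive_TCset _) fun _ hb => subset_TCset _ (mem_sep.1 hb).1

theorem BoundedGrowth.isHF {f : (Fin 0 → ZFSet) → ZFSet} (hf : BoundedGrowth f)
    (a : Fin 0 → ZFSet) : IsHF (f a) := by
  obtain ⟨C, hC⟩ := hf
  have := hC a
  simp only [Set.iUnion_of_empty, Set.sdiff_empty] at this
  exact Set.finite_of_encard_le_coe this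

theorem PCSF.boundedGrowth {n m : ℕ} {f : (Fin n → ZFSet) → (Fin m → ZFSet) → ZFSet}
    (hf : PCSF n m f) (x : Fin n → ZFSet) (hx : ∀ j, IsHF (x j)) : BoundedGrowth (f x) := by
  induction hf with
  | ofMinus _ hh => exact hh.boundedGrowth
  | @proj n m j =>
    induction j using Fin.addCases with
    | left j => simpa only [Fin.append_left] using BoundedGrowth.const (hx j)
    | right j => simpa only [Fin.append_right] using BoundedGrowth.proj j
  | comp _ _ _ _ _ _ ihh ihr iht =>
    exact (ihh _ fun i => (ihr i x hx).isHF Fin.elim0).comp fun i => iht i x hx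
  | recur _ g _ hg ihh =>
    suffices ∀ x₀, IsHF x₀ → BoundedGrowth (g (Fin.cons x₀ (Fin.tail x))) by
      simpa only [Fin.cons_self_tail] using this (x 0) (hx 0)
    intro x₀
    induction x₀ using ZFSet.inductionOn with
    | _ x₀ ih =>
      intro hx₀
      have hcons : ∀ j, IsHF (Fin.cons x₀ (Fin.tail x) j) := fun j => by
        induction j using Fin.cases with
        | zero => exact hx₀
        | succ j => exact hx j.succ
      simp only [funext (hg x₀ (Fin.tail x))]
      exact (ihh _ hcons).snoc (.image hx₀.finite fun z hz => ih z hz (hx₀.of_mem hz))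

def zermelo : ℕ → ZFSet
  | 0 => ∅
  | n + 1 => {zermelo n}

theorem zermelo_succ_ne_empty (n : ℕ) : zermelo (n + 1) ≠ ∅ :=
  singleton_ne_empty _

theorem zermelo_injective : Function.Injective zermelo := by
  intro i j h
  induction i generalizing j with
  | zero => cases j with
    | zero => rfl
    | succ j => exact (zermelo_succ_ne_empty j h.symm).elim
  | succ i ih => cases j with
    | zero => exact (zermelo_succ_ne_empty i h).elim
    | succ j => exact congrArg _ (ih (ZFSet.singleton_injective h))

theorem subsingleton_zermelo (n : ℕ) : (zermelo n : Set ZFSet).Subsingleton := by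
  cases n <;> simp [zermelo]

theorem mem_TCset_zermelo {w : ZFSet} {n : ℕ} :
    w ∈ TCset (zermelo n) ↔ ∃ j < n, w = zermelo j := by
  induction n with
  | zero => simp [zermelo, TCset_eq_self isTransitive_empty]
  | succ n ih =>
    rw [zermelo, mem_TCset]
    simp only [mem_singleton, exists_eq_left, ih]
    constructor
    · rintro (rfl | ⟨j, hj, rfl⟩)
      exacts [⟨n, n.lt_succ_self, rfl⟩, ⟨j, by omega, rfl⟩]
    · rintro ⟨j, hj, rfl⟩
      rcases Nat.lt_succ_iff_lt_or_eq.1 hj with hj | rfl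
      exacts [.inr ⟨j, hj, rfl⟩, .inl rfl]

/-- In `{0} × a` each `s ∈ a` contributes `{∅, s} ∈ ⟨∅, s⟩`. For `a = TC(zermelo (C + 2))` these
are `C + 1` sets with two elements, while `TC(a) = a` has only subsingletons. -/
theorem not_boundedGrowth_singleton_prod :
    ¬ BoundedGrowth fun a : Fin 1 → ZFSet => zImage (fun b => kpair ∅ b) (a 0) := by
  rintro ⟨C, hC⟩
  set a := TCset (zermelo (C + 2))
  set q : ℕ → ZFSet := fun j => {∅, zermelo (j + 1)}
  have hq : Set.InjOn q (Finset.range (C + 1)) := fun i _ j _ hij => by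
    have hi : zermelo (i + 1) ∈ q j := hij ▸ mem_pair.2 (.inr rfl)
    rcases mem_pair.1 hi with h | h
    · exact (zermelo_succ_ne_empty i h).elim
    · exact Nat.succ_injective (zermelo_injective h)
  have hnew : q '' (Finset.range (C + 1)) ⊆
      (TCset (zImage (fun b => kpair ∅ b) a) : Set ZFSet) \ ⋃ _ : Fin 1, (TCset a : Set ZFSet) := by
    rintro _ ⟨j, hj, rfl⟩
    simp only [Finset.coe_range, Set.mem_Iio] at hj
    have hja : zermelo (j + 1) ∈ a := mem_TCset_zermelo.2 ⟨j + 1, by omega, rfl⟩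
    refine ⟨(isTransitive_TCset _).mem_trans (mem_kpair_right _ _)
      (subset_TCset _ (mem_zImage.2 ⟨_, hja, rfl⟩)), ?_⟩
    simp only [Set.iUnion_const, SetLike.mem_coe, a, TCset_eq_self (isTransitive_TCset _),
      mem_TCset_zermelo, not_exists, not_and]
    intro i _ hi
    have h₀ : ∅ ∈ zermelo i := by rw [← hi]; exact mem_pair.2 (.inl rfl)
    have h₁ : zermelo (j + 1) ∈ zermelo i := by rw [← hi]; exact mem_pair.2 (.inr rfl)
    exact zermelo_succ_ne_empty j (subsingleton_zermelo i h₁ h₀)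
  have := (Set.encard_le_encard hnew).trans (hC fun _ => a)
  rw [hq.encard_image, Set.encard_coe_eq_coe_finsetCard, Finset.card_range] at this
  exact absurd (ENat.natCast_le_natCast.1 this) (by omega)

namespace PCSFminus

variable {m : ℕ} {f g c d : (Fin m → ZFSet) → ZFSet}

theorem empty' : PCSFminus m fun _ => ∅ :=
  .comp _ Fin.elim0 .null fun i => i.elim0

theorem pair' (hf : PCSFminus m f) (hg : PCSFminus m g) : PCSFminus m fun a => {f a, g a} := by
  have := PCSFminus.comp _ ![f, g] .pair fun i => by fin_cases i <;> assumption
  simpa using this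

theorem sUnion' (hf : PCSFminus m f) : PCSFminus m fun a => ⋃₀ f a :=
  .comp _ ![f] .union fun i => by fin_cases i; assumption

theorem union' (hf : PCSFminus m f) (hg : PCSFminus m g) : PCSFminus m fun a => f a ∪ g a :=
  (hf.pair' hg).sUnion'

theorem singleton' (hf : PCSFminus m f) : PCSFminus m fun a => {f a} := by
  simpa using hf.pair' hf

theorem kpair' (hf : PCSFminus m f) (hg : PCSFminus m g) : PCSFminus m fun a => kpair (f a) (g a) :=
  hf.singleton'.pair' (hf.pair' hg)

theorem ite_mem (hf : PCSFminus m f) (hg : PCSFminus m g) (hc : PCSFminus m c)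
    (hd : PCSFminus m d) : PCSFminus m fun a => if c a ∈ d a then f a else g a := by
  have := PCSFminus.comp _ ![f, g, c, d] .cond fun i => by fin_cases i <;> assumption
  simpa using this

theorem sep' {h : (Fin (m + 1) → ZFSet) → ZFSet} (hh : PCSFminus (m + 1) h)
    (hg : PCSFminus m g) :
    PCSFminus m fun a => ZFSet.sep (fun b => h (Fin.snoc a b) ≠ ∅) (g a) := by
  have := PCSFminus.comp _ (fun i a => Fin.snoc (α := fun _ => ZFSet) a (g a) i) (.sep h hh)
    fun i => by
      induction i using Fin.lastCases with
      | last => simpa only [Fin.snoc_last] using hg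
      | cast j => simpa only [Fin.snoc_castSucc] using proj j
  simpa only [Fin.init_snoc, Fin.snoc_last] using this

end PCSFminus

def relImage (R x : ZFSet) : ZFSet := ZFSet.sep (fun q => ∃ z ∈ x, kpair z q ∈ R) (⋃₀ ⋃₀ R)

theorem mem_relImage {R x q : ZFSet} : q ∈ relImage R x ↔ ∃ z ∈ x, kpair z q ∈ R := by
  refine mem_sep.trans ⟨And.right, fun h => ⟨?_, h⟩⟩
  obtain ⟨z, _, hR⟩ := h
  exact mem_sUnion_of_mem (mem_pair.2 (.inr rfl)) (mem_sUnion_of_mem (mem_kpair_right z q) hR)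

theorem sep_ne_empty {p : ZFSet → Prop} {x : ZFSet} : ZFSet.sep p x ≠ ∅ ↔ ∃ z ∈ x, p z := by
  simp [ZFSet.eq_empty, mem_sep]

theorem PCSFminus.relImage : PCSFminus 2 fun a => relImage (a 0) (a 1) := by
  have hmem : PCSFminus 4 fun c => if kpair (c 3) (c 2) ∈ c 0 then {∅} else ∅ :=
    empty'.singleton'.ite_mem empty' ((proj 3).kpair' (proj 2)) (proj 0)
  convert (hmem.sep' (proj 1)).sep' (proj 0).sUnion'.sUnion' using 3 with a q
  simp [PCSFPaper.relImage, Fin.snoc, sep_ne_empty, singleton_ne_empty]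

namespace PCSF

variable {n m : ℕ}

theorem projN (j : Fin n) : PCSF n m fun x _ => x j := by
  simpa only [Fin.append_left] using PCSF.proj (n := n) (m := m) (Fin.castAdd m j)

theorem projS (j : Fin m) : PCSF n m fun _ a => a j := by
  simpa only [Fin.append_right] using PCSF.proj (n := n) (m := m) (Fin.natAdd n j)

theorem comp' {k l : ℕ} {h : (Fin k → ZFSet) → (Fin l → ZFSet) → ZFSet}
    {t : Fin l → (Fin n → ZFSet) → (Fin m → ZFSet) → ZFSet}
    (hh : PCSF k l h) (σ : Fin k → Fin n) (ht : ∀ i, PCSF n m (t i)) :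
    PCSF n m fun x a => h (fun i => x (σ i)) fun i => t i x a :=
  PCSF.comp h (fun i x _ => x (σ i)) t hh (fun i => projN (σ i)) ht

theorem compMinus {l : ℕ} {h : (Fin l → ZFSet) → ZFSet}
    {t : Fin l → (Fin n → ZFSet) → (Fin m → ZFSet) → ZFSet}
    (hh : PCSFminus l h) (ht : ∀ i, PCSF n m (t i)) : PCSF n m fun x a => h fun i => t i x a :=
  comp' (.ofMinus h hh) Fin.elim0 ht

theorem memRec' {h : (Fin (n + 1) → ZFSet) → (Fin (m + 1) → ZFSet) → ZFSet}
    (hh : PCSF (n + 1) (m + 1) h) :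
    PCSF (n + 1) m fun x a =>
      memRec (fun z P => h (Fin.cons z (Fin.tail x)) (Fin.snoc a P)) (x 0) :=
  .recur h _ hh fun x y a => by
    simp only [Fin.cons_zero, Fin.tail_cons]
    exact memRec_eq _ x

end PCSF

def graphTC (g : ZFSet → ZFSet) : ZFSet → ZFSet := memRec fun x P => {kpair x (g x)} ∪ ⋃₀ P

theorem mem_graphTC {g : ZFSet → ZFSet} {x p : ZFSet} :
    p ∈ graphTC g x ↔ p = kpair x (g x) ∨ ∃ z ∈ x, p ∈ graphTC g z := by
  rw [graphTC, memRec_eq, mem_union, mem_singleton, mem_sUnion]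
  simp only [mem_zImage]
  constructor
  · rintro (h | ⟨_, ⟨z, hz, rfl⟩, hp⟩)
    exacts [.inl h, .inr ⟨z, hz, hp⟩]
  · rintro (h | ⟨z, hz, hp⟩)
    exacts [.inl h, .inr ⟨_, ⟨z, hz, rfl⟩, hp⟩]

theorem eq_of_kpair_mem_graphTC {g : ZFSet → ZFSet} {x z q : ZFSet}
    (h : kpair z q ∈ graphTC g x) : q = g z := by
  induction x using ZFSet.inductionOn with
  | _ x ih =>
    rcases mem_graphTC.1 h with h | ⟨y, hy, h⟩
    · obtain ⟨rfl, rfl⟩ := kpair_inj.1 h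
      rfl
    · exact ih y hy h

theorem relImage_graphTC (g : ZFSet → ZFSet) (x : ZFSet) :
    relImage (graphTC g x) x = zImage g x := by
  ext q
  rw [mem_relImage, mem_zImage]
  constructor
  · rintro ⟨z, hz, h⟩
    exact ⟨z, hz, (eq_of_kpair_mem_graphTC h).symm⟩
  · rintro ⟨z, hz, rfl⟩
    exact ⟨z, hz, mem_graphTC.2 (.inr ⟨z, hz, mem_graphTC.2 (.inl rfl)⟩)⟩

theorem PCSF.image {n m : ℕ} {g : (Fin (n + 1) → ZFSet) → (Fin m → ZFSet) → ZFSet}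
    (hg : PCSF (n + 1) m g) :
    PCSF (n + 1) m fun x a => zImage (fun z => g (Fin.cons z (Fin.tail x)) a) (x 0) := by
  have hstep : PCSF (n + 1) (m + 1) fun x a =>
      {kpair (x 0) (g x (Fin.init a))} ∪ ⋃₀ a (Fin.last m) := by
    refine compMinus (h := fun b => {kpair (b 0) (b 1)} ∪ ⋃₀ b 2)
      (t := ![fun x _ => x 0, fun x a => g x (Fin.init a), fun _ a => a (Fin.last m)])
      (((PCSFminus.proj 0).kpair' (.proj 1)).singleton'.union' (PCSFminus.proj 2).sUnion') ?_
    intro i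
    fin_cases i
    exacts [projN 0, comp' hg id fun i => projS i.castSucc, projS _]
  have hgraph :
      PCSF (n + 1) m fun x a => graphTC (fun z => g (Fin.cons z (Fin.tail x)) a) (x 0) := by
    have := PCSF.memRec' hstep
    simp only [Fin.cons_zero, Fin.init_snoc, Fin.snoc_last] at this
    exact this
  have := compMinus PCSFminus.relImage
    (t := ![fun x a => graphTC (fun z => g (Fin.cons z (Fin.tail x)) a) (x 0), fun x _ => x 0])
    fun i => by fin_cases i; exacts [hgraph, projN 0]
  simp only [Matrix.cons_val_zero, Matrix.cons_val_one, relImage_graphTC] at this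
  exact this

theorem PCSF.zProd : PCSF 2 0 fun x _ => zProd (x 0) (x 1) := by
  have hpair : PCSF 2 0 fun x _ => kpair (x 1) (x 0) :=
    compMinus ((PCSFminus.proj 0).kpair' (.proj 1)) (t := ![fun x _ => x 1, fun x _ => x 0])
      fun i => by fin_cases i <;> exact projN _
  have hsingle : PCSF 2 0 fun x _ => zImage (fun v => kpair (x 1) v) (x 0) := by
    simpa [Fin.tail] using hpair.image
  have hsingle' : PCSF 2 0 fun x _ => zImage (fun v => kpair (x 0) v) (x 1) := by
    simpa using comp' hsingle ![1, 0] (t := Fin.elim0) fun i => i.elim0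
  have := compMinus PCSFminus.union (t := ![_]) fun i => by
    fin_cases i
    simpa using hsingle'.image
  simp only [Matrix.cons_val_fin_one, Fin.tail] at this
  exact this

theorem not_PCSF_singleton_prod : ¬ PCSF 0 1 fun _ a => zImage (fun b => kpair ∅ b) (a 0) :=
  fun h => not_boundedGrowth_singleton_prod (h.boundedGrowth Fin.elim0 fun j => j.elim0)

theorem zProd_singleton_empty (b : ZFSet) : zProd {∅} b = zImage (fun v => kpair ∅ v) b := by
  rw [zProd, zImage_singleton, sUnion_singleton]

theorem not_PCSF_zProd : ¬ PCSF 0 2 fun _ a => zProd (a 0) (a 1) := fun h => by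
  refine not_PCSF_singleton_prod ?_
  have := h.comp' (n := 0) (m := 1) Fin.elim0 (t := ![fun _ _ => {∅}, fun _ a => a 0])
    fun i => by fin_cases i; exacts [.ofMinus _ PCSFminus.empty'.singleton', PCSF.projS 0]
  simpa [zProd_singleton_empty] using this

/-- The Cartesian product with safe arguments is not in
`PCSF`, and neither is `f(−/a) = {0} × a`; but the Cartesian product with
normal arguments is in `PCSF`. -/
theorem prod_not_PCSF :
    ¬ PCSF 0 2 (fun _ a => zProd (a 0) (a 1)) ∧
    ¬ PCSF 0 1 (fun _ a => zImage (fun b => kpair ∅ b) (a 0)) ∧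
    PCSF 2 0 fun x _ => zProd (x 0) (x 1) :=
  ⟨not_PCSF_zProd, not_PCSF_singleton_prod, PCSF.zProd⟩

end PCSFPaper
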